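/- arXiv:1801.08227 — 4 statements merged into one kernel-verified Lean document; each statement's English description precedes it below -/
import Mathlib

section
/- Let Z be an m×n real matrix with singular value decomposition Z = U diag(σ) V', where σ = (σ_1, …, σ_{min(m,n)}) are the singular values of Z. Let s ∈ ℝ^{min(m,n)} be any minimizer over the set {α : α ≥ 0} of ḡ(α) := (1/2)‖α − σ‖_2² + Σ_{i=1}^{min(m,n)} P(α_i; λ, γ). Then the matrix X* = U diag(s) V' is a minimizer over all m×n matrices X of g(X) := (1/2)‖X − Z‖_F² + Σ_{i=1}^{min(m,n)} P(σ_i(X); λ, γ); that is, the spectral thresholding operator acts only on the singular values of Z and leaves the singular vectors unchanged. -/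
open Matrix

/-- Squared Frobenius norm of a real matrix. -/
noncomputable def frobSq {m n : ℕ} (A : Matrix (Fin m) (Fin n) ℝ) : ℝ :=
  ∑ i, ∑ j, (A i j) ^ 2

/-- The spectral penalty `∑_{i=1}^{min(m,n)} P(σ_i(X))`: the singular values of `X` are the
square roots of the eigenvalues of the smaller of the two Gram matrices `XᵀX`, `XXᵀ`. -/
noncomputable def spen {m n : ℕ} (P : ℝ → ℝ) (X : Matrix (Fin m) (Fin n) ℝ) : ℝ :=
  if n ≤ m then
    ∑ i : Fin n, P (Real.sqrt ((Matrix.isHermitian_conjTranspose_mul_self X).eigenvalues i))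
  else
    ∑ i : Fin m, P (Real.sqrt ((Matrix.isHermitian_mul_conjTranspose_self X).eigenvalues i))

/-!
`Uᵀ U = 1` forces `n ≤ m`, so the penalty of `X` is `∑ P(τᵢ)` for the singular values `τ` of `X`,
listed in decreasing order, while `X* = U diag(s) Vᵀ` has singular values `s` and
`‖X* − Z‖_F = ‖s − σ‖`. Since `τ ≥ 0` is admissible for `ḡ`, it suffices to prove Mirsky's
inequality `‖τ − σ‖² ≤ ‖X − Z‖_F²`, i.e. von Neumann's trace inequality `tr(ZᵀX) ≤ ∑ τᵢ σᵢ`.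

Diagonalise `XᵀX = W diag(λ) Wᵀ` and put `Y = X W` (orthogonal columns of norms `√λₖ`),
`C = Uᵀ Y`, `E = Vᵀ W`. Then `tr(ZᵀX) = ∑ₗₖ σₗ Cₗₖ Eₗₖ`, and by AM–GM
`Cₗₖ Eₗₖ ≤ √λₖ Fₖₗ` with `Fₖₗ = (Cₗₖ²/λₖ + Eₗₖ²)/2`. Bessel's inequality, applied once to the
columns of `U` and once to those of `Y`, makes `F` doubly substochastic, and for such `F` and
decreasing nonnegative `a`, `b` Abel summation gives `∑ Fₖₗ aₖ bₗ ≤ ∑ aᵢ bᵢ`.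
-/

open Finset

theorem Tuple.exists_perm_antitone {α : Type*} [LinearOrder α] {n : ℕ} (f : Fin n → α) :
    ∃ π : Equiv.Perm (Fin n), Antitone (f ∘ π) :=
  ⟨Fin.revPerm.trans (Tuple.sort f),
    (Tuple.monotone_sort f).comp_antitone fun _ _ => Fin.rev_le_rev.2⟩

theorem Finset.sum_mul_nonneg_of_antitoneOn {ι : Type*} [LinearOrder ι] {s : Finset ι}
    {a d : ι → ℝ} (ha : AntitoneOn a s) (ha0 : ∀ i ∈ s, 0 ≤ a i)
    (hd : ∀ t ∈ s, 0 ≤ ∑ i ∈ s with i ≤ t, d i) :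
    0 ≤ ∑ i ∈ s, a i * d i := by
  induction s using Finset.induction_on_max generalizing a with
  | empty => simp
  | insert m s hlt ih =>
    have hm : m ∉ s := fun h => lt_irrefl m (hlt m h)
    have hsplit : ∑ i ∈ insert m s, a i * d i =
        ∑ i ∈ s, (a i - a m) * d i + a m * ∑ i ∈ insert m s, d i := by
      simp only [sum_insert hm, sub_mul, sum_sub_distrib, mul_add, mul_sum]
      ring
    rw [hsplit]
    refine add_nonneg (ih ?_ ?_ ?_) (mul_nonneg (ha0 m (mem_insert_self m s)) ?_)
    · exact fun i hi j hj hij =>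
        sub_le_sub_right (ha (mem_insert_of_mem hi) (mem_insert_of_mem hj) hij) _
    · exact fun i hi =>
        sub_nonneg.2 (ha (mem_insert_of_mem hi) (mem_insert_self m s) (hlt i hi).le)
    · intro t ht
      simpa [filter_insert, not_le.2 (hlt t ht)] using hd t (mem_insert_of_mem ht)
    · have hall : {i ∈ insert m s | i ≤ m} = insert m s :=
        filter_true_of_mem fun i hi => (mem_insert.1 hi).elim le_of_eq fun hi => (hlt i hi).le
      simpa only [hall] using hd m (mem_insert_self m s)

theorem sum_mul_le_sum_of_le_one {ι : Type*} [Fintype ι] {s : Finset ι} {w b : ι → ℝ} {β : ℝ}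
    (hβ : 0 ≤ β) (hw0 : ∀ i, 0 ≤ w i) (hw1 : ∀ i, w i ≤ 1) (hw : ∑ i, w i ≤ #s)
    (hbs : ∀ i ∈ s, β ≤ b i) (hbs' : ∀ i ∉ s, b i ≤ β) :
    ∑ i, w i * b i ≤ ∑ i ∈ s, b i := by
  classical
  have hpt : ∀ i, w i * b i - (if i ∈ s then b i else 0) ≤
      β * (w i - if i ∈ s then 1 else 0) := by
    intro i
    split_ifs with hi
    · nlinarith [hbs i hi, hw1 i]
    · nlinarith [hbs' i hi, hw0 i]
  have := sum_le_sum fun i (_ : i ∈ univ) => hpt i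
  simp only [sum_sub_distrib, ← mul_sum, sum_ite_mem, univ_inter, sum_const, nsmul_eq_mul,
    mul_one] at this
  nlinarith

theorem sum_mul_mul_le_sum_mul_of_substochastic {ι : Type*} [Fintype ι] [LinearOrder ι]
    {F : ι → ι → ℝ} (hF : ∀ k l, 0 ≤ F k l) (hrow : ∀ k, ∑ l, F k l ≤ 1)
    (hcol : ∀ l, ∑ k, F k l ≤ 1) {a b : ι → ℝ} (ha : Antitone a) (ha0 : ∀ i, 0 ≤ a i)
    (hb : Antitone b) (hb0 : ∀ i, 0 ≤ b i) :
    ∑ k, ∑ l, F k l * a k * b l ≤ ∑ i, a i * b i := by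
  set c : ι → ℝ := fun k => ∑ l, F k l * b l
  have hpartial : ∀ t, ∑ k with k ≤ t, c k ≤ ∑ k with k ≤ t, b k := by
    intro t
    have hswap : ∑ k with k ≤ t, c k = ∑ l, (∑ k with k ≤ t, F k l) * b l := by
      simp only [c, sum_mul]
      exact sum_comm
    rw [hswap]
    refine sum_mul_le_sum_of_le_one (hb0 t) (fun l => sum_nonneg fun k _ => hF k l)
      (fun l => (sum_le_sum_of_subset_of_nonneg (filter_subset _ _)
        fun k _ _ => hF k l).trans (hcol l)) ?_
      (fun i hi => hb (mem_filter.1 hi).2)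
      (fun i hi => hb (not_le.1 fun h => hi (by simpa using h)).le)
    rw [sum_comm]
    simpa using sum_le_sum fun k (_ : k ∈ filter (· ≤ t) univ) => hrow k
  have hnonneg := sum_mul_nonneg_of_antitoneOn (s := univ) (d := fun k => b k - c k)
    (ha.antitoneOn _) (fun i _ => ha0 i) fun t _ => by
      simpa [sum_sub_distrib] using hpartial t
  calc ∑ k, ∑ l, F k l * a k * b l = ∑ k, a k * c k := by
        simp only [c, mul_sum]
        exact sum_congr rfl fun k _ => sum_congr rfl fun l _ => by ring
    _ ≤ ∑ i, a i * b i := by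
        simpa [mul_sub, sum_sub_distrib] using hnonneg

theorem mul_le_sqrt_mul_add_div {c e l : ℝ} (hl : 0 ≤ l) (hc : l = 0 → c = 0) :
    c * e ≤ √l * ((c ^ 2 / l + e ^ 2) / 2) := by
  rcases hl.eq_or_lt with rfl | hl
  · simp [hc rfl]
  · have ha : 0 < √l := Real.sqrt_pos.2 hl
    set a := √l
    rw [← Real.sq_sqrt hl.le]
    field_simp
    nlinarith [mul_nonneg ha.le (sq_nonneg (c - a * e))]

/-- Bessel's inequality for the columns of `W`; the junk value `x / 0 = 0` makes the zero
columns drop out. -/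
theorem Matrix.sum_vecMul_sq_div_le {ι κ : Type*} [Fintype ι] [Fintype κ] [DecidableEq κ]
    {W : Matrix ι κ ℝ} {lam : κ → ℝ} (hW : Wᵀ * W = diagonal lam) (p : ι → ℝ) :
    ∑ k, (p ᵥ* W) k ^ 2 / lam k ≤ p ⬝ᵥ p := by
  set c : κ → ℝ := fun k => (p ᵥ* W) k / lam k
  set t := W *ᵥ c
  have hpt : p ⬝ᵥ t = ∑ k, (p ᵥ* W) k ^ 2 / lam k := by
    rw [dotProduct_mulVec]
    exact sum_congr rfl fun k _ => by ring
  have htt : t ⬝ᵥ t = ∑ k, (p ᵥ* W) k ^ 2 / lam k := by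
    rw [dotProduct_mulVec, ← mulVec_transpose, mulVec_mulVec, hW]
    simp only [dotProduct, mulVec_diagonal]
    refine sum_congr rfl fun k _ => ?_
    rcases eq_or_ne (lam k) 0 with h | h
    · simp [c, h]
    · simp only [c]
      field_simp
  have := dotProduct_self_star_nonneg (p - t)
  simp only [star_trivial, sub_dotProduct, dotProduct_sub, dotProduct_comm t p, hpt, htt] at this
  linarith

theorem Matrix.sum_sq_eq_one_of_transpose_mul_self_eq_one {ι : Type*} [Fintype ι]
    [DecidableEq ι] {E : Matrix ι ι ℝ} (hE : Eᵀ * E = 1) (k : ι) : ∑ l, E l k ^ 2 = 1 := by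
  simpa [mul_apply, sq] using congrFun (congrFun hE k) k

theorem Matrix.trace_diagonal_mul_mul_transpose_le {ι κ : Type*} [Fintype ι] [Fintype κ]
    [DecidableEq κ] [LinearOrder κ] {U Y : Matrix ι κ ℝ} {E : Matrix κ κ ℝ} {lam σ : κ → ℝ}
    (hU : Uᵀ * U = 1) (hY : Yᵀ * Y = diagonal lam) (hE : Eᵀ * E = 1)
    (hσ : Antitone σ) (hσ0 : ∀ i, 0 ≤ σ i) (π : Equiv.Perm κ)
    (hπ : Antitone fun i => √(lam (π i))) :
    trace (diagonal σ * (Uᵀ * Y) * Eᵀ) ≤ ∑ i, √(lam (π i)) * σ i := by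
  set C := Uᵀ * Y
  have hC_col : ∀ k, ∑ l, C l k ^ 2 ≤ lam k := fun k => by
    have h := sum_vecMul_sq_div_le (hU.trans diagonal_one.symm) (Yᵀ k)
    rw [show Yᵀ k ⬝ᵥ Yᵀ k = lam k by rw [← diagonal_apply_eq lam k, ← hY]; rfl] at h
    simpa [C, mul_apply, vecMul, dotProduct, mul_comm] using h
  have hC_row : ∀ l, ∑ k, C l k ^ 2 / lam k ≤ 1 := fun l => by
    have h := sum_vecMul_sq_div_le hY (Uᵀ l)
    rw [show Uᵀ l ⬝ᵥ Uᵀ l = 1 by rw [← one_apply_eq (α := ℝ) l, ← hU]; rfl] at h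
    simpa [C, mul_apply, vecMul, dotProduct] using h
  have hlam0 : ∀ k, 0 ≤ lam k := fun k =>
    (sum_nonneg fun l _ => sq_nonneg (C l k)).trans (hC_col k)
  have hC_zero : ∀ k, lam k = 0 → ∀ l, C l k = 0 := fun k hk l => by
    have := (sum_eq_zero_iff_of_nonneg fun l _ => sq_nonneg (C l k)).1
      (le_antisymm (hk ▸ hC_col k) (sum_nonneg fun l _ => sq_nonneg _)) l (mem_univ l)
    exact pow_eq_zero_iff two_ne_zero |>.1 this
  set F : κ → κ → ℝ := fun k l => (C l k ^ 2 / lam k + E l k ^ 2) / 2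
  have hF0 : ∀ k l, 0 ≤ F k l := fun k l => by
    have := div_nonneg (sq_nonneg (C l k)) (hlam0 k)
    positivity
  have hF_row : ∀ k, ∑ l, F k l ≤ 1 := fun k => by
    have h1 := div_le_one_of_le₀ (hC_col k) (hlam0 k)
    have h2 := sum_sq_eq_one_of_transpose_mul_self_eq_one hE k
    simp only [F, ← sum_div, sum_add_distrib]
    linarith
  have hF_col : ∀ l, ∑ k, F (π k) l ≤ 1 := fun l => by
    have h2 := sum_sq_eq_one_of_transpose_mul_self_eq_one (E := Eᵀ)
      (by rw [transpose_transpose, mul_eq_one_comm, hE]) l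
    simp only [transpose_apply] at h2
    rw [Equiv.sum_comp π (F · l)]
    simp only [F, ← sum_div, sum_add_distrib]
    linarith [hC_row l]
  calc trace (diagonal σ * C * Eᵀ) = ∑ l, σ l * ∑ k, C l k * E l k := by
        simp [trace, mul_apply, diagonal_apply, mul_sum, mul_assoc]
    _ ≤ ∑ l, σ l * ∑ k, √(lam k) * F k l := by
        refine sum_le_sum fun l _ => mul_le_mul_of_nonneg_left (sum_le_sum fun k _ => ?_) (hσ0 l)
        exact mul_le_sqrt_mul_add_div (hlam0 k) fun h => hC_zero k h l
    _ = ∑ k, ∑ l, F (π k) l * √(lam (π k)) * σ l := by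
        rw [Equiv.sum_comp π fun k => ∑ l, F k l * √(lam k) * σ l, sum_comm]
        simp only [mul_sum]
        exact sum_congr rfl fun l _ => sum_congr rfl fun k _ => by ring
    _ ≤ ∑ i, √(lam (π i)) * σ i :=
        sum_mul_mul_le_sum_mul_of_substochastic (fun k l => hF0 (π k) l) (fun k => hF_row (π k))
          hF_col hπ (fun i => Real.sqrt_nonneg _) hσ hσ0

theorem Matrix.IsHermitian.exists_orthogonal_diagonalization {ι : Type*} [Fintype ι]
    [DecidableEq ι] {A : Matrix ι ι ℝ} (hA : A.IsHermitian) :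
    ∃ W : Matrix ι ι ℝ, Wᵀ * W = 1 ∧ A = W * diagonal hA.eigenvalues * Wᵀ := by
  refine ⟨hA.eigenvectorUnitary, ?_, ?_⟩
  · simpa [star_eq_conjTranspose] using Unitary.coe_star_mul_self hA.eigenvectorUnitary
  · simpa [Unitary.conjStarAlgAut_apply, star_eq_conjTranspose] using hA.spectral_theorem

theorem Matrix.IsHermitian.sum_comp_eigenvalues_of_eq_conj {ι : Type*} [Fintype ι]
    [DecidableEq ι] {A W : Matrix ι ι ℝ} (hA : A.IsHermitian) {d : ι → ℝ} (hW : Wᵀ * W = 1)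
    (hAW : A = W * diagonal d * Wᵀ) (f : ℝ → ℝ) :
    ∑ i, f (hA.eigenvalues i) = ∑ i, f (d i) := by
  have hprod : ∀ g : ι → ℝ, ∏ i, (Polynomial.X - Polynomial.C (g i)) =
      ((univ.val.map g).map fun a => Polynomial.X - Polynomial.C a).prod := fun g => by
    rw [prod_eq_multiset_prod, Multiset.map_map]
    rfl
  have hroots : univ.val.map hA.eigenvalues = univ.val.map d := by
    have hcharpoly : A.charpoly = (diagonal d).charpoly := by
      rw [hAW, charpoly_mul_comm, ← Matrix.mul_assoc, hW, Matrix.one_mul]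
    have h := hA.charpoly_eq
    rw [hcharpoly, charpoly_diagonal, hprod, hprod] at h
    have := congrArg Polynomial.roots h
    rwa [Polynomial.roots_multiset_prod_X_sub_C, Polynomial.roots_multiset_prod_X_sub_C,
      eq_comm] at this
  simpa only [sum_eq_multiset_sum, Multiset.map_map, Function.comp_def] using
    congrArg (fun s => (s.map f).sum) hroots

theorem Matrix.card_le_card_of_transpose_mul_self_eq_one {R ι κ : Type*} [Field R] [Fintype ι]
    [Fintype κ] [DecidableEq κ] {U : Matrix ι κ R} (hU : Uᵀ * U = 1) :
    Fintype.card κ ≤ Fintype.card ι := by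
  have := rank_mul_le_left Uᵀ U
  rw [hU, rank_one] at this
  exact this.trans (rank_le_card_width Uᵀ)

section Frobenius

variable {m n : ℕ}

theorem frobSq_eq_trace (A : Matrix (Fin m) (Fin n) ℝ) : frobSq A = trace (Aᵀ * A) := by
  simp only [frobSq, trace, diag_apply, mul_apply, transpose_apply, sq]
  exact sum_comm

theorem frobSq_sub (A B : Matrix (Fin m) (Fin n) ℝ) :
    frobSq (A - B) = frobSq A - 2 * trace (Bᵀ * A) + frobSq B := by
  have hAB : trace (Aᵀ * B) = trace (Bᵀ * A) := by
    rw [← trace_transpose, transpose_mul, transpose_transpose]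
  rw [frobSq_eq_trace, frobSq_eq_trace, frobSq_eq_trace, transpose_sub, Matrix.sub_mul,
    Matrix.mul_sub, Matrix.mul_sub, trace_sub, trace_sub, trace_sub, hAB]
  ring

theorem transpose_mul_self_mul_diagonal_mul {U : Matrix (Fin m) (Fin n) ℝ}
    (hU : Uᵀ * U = 1) (V : Matrix (Fin n) (Fin n) ℝ) (d : Fin n → ℝ) :
    (U * diagonal d * Vᵀ)ᵀ * (U * diagonal d * Vᵀ) = V * diagonal (fun i => d i ^ 2) * Vᵀ := by
  simp only [transpose_mul, transpose_transpose, diagonal_transpose, Matrix.mul_assoc]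
  rw [← Matrix.mul_assoc Uᵀ, hU, Matrix.one_mul, ← Matrix.mul_assoc (diagonal d),
    diagonal_mul_diagonal]
  simp [sq]

theorem frobSq_mul_diagonal_mul {U : Matrix (Fin m) (Fin n) ℝ} {V : Matrix (Fin n) (Fin n) ℝ}
    (hU : Uᵀ * U = 1) (hV : Vᵀ * V = 1) (d : Fin n → ℝ) :
    frobSq (U * diagonal d * Vᵀ) = ∑ i, d i ^ 2 := by
  rw [frobSq_eq_trace, transpose_mul_self_mul_diagonal_mul hU, trace_mul_comm,
    ← Matrix.mul_assoc, hV, Matrix.one_mul, trace_diagonal]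

end Frobenius

/-- The square roots of the eigenvalues of `XᵀX`, in the (unsorted) order of
`Matrix.IsHermitian.eigenvalues`; for `n ≤ m` these are the singular values of `X`. -/
noncomputable def gramSingularValues {m n : ℕ} (X : Matrix (Fin m) (Fin n) ℝ) : Fin n → ℝ :=
  fun k => √((isHermitian_conjTranspose_mul_self X).eigenvalues k)

section SingularValues

variable {m n : ℕ} {U : Matrix (Fin m) (Fin n) ℝ} {V : Matrix (Fin n) (Fin n) ℝ}

theorem spen_eq_sum_gramSingularValues (P : ℝ → ℝ) (X : Matrix (Fin m) (Fin n) ℝ)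
    (hnm : n ≤ m) : spen P X = ∑ i, P (gramSingularValues X i) := by
  rw [spen, if_pos hnm]
  rfl

theorem spen_mul_diagonal_mul (P : ℝ → ℝ) (hnm : n ≤ m) (hU : Uᵀ * U = 1) (hV : Vᵀ * V = 1)
    {d : Fin n → ℝ} (hd : ∀ i, 0 ≤ d i) : spen P (U * diagonal d * Vᵀ) = ∑ i, P (d i) := by
  rw [spen, if_pos hnm, (isHermitian_conjTranspose_mul_self _).sum_comp_eigenvalues_of_eq_conj hV
    (by rw [conjTranspose_eq_transpose_of_trivial, transpose_mul_self_mul_diagonal_mul hU])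
    (fun x => P √x)]
  exact sum_congr rfl fun i _ => by rw [Real.sqrt_sq (hd i)]

theorem sum_sq_gramSingularValues (X : Matrix (Fin m) (Fin n) ℝ) :
    ∑ i, gramSingularValues X i ^ 2 = frobSq X := by
  rw [frobSq_eq_trace, ← conjTranspose_eq_transpose_of_trivial,
    (isHermitian_conjTranspose_mul_self X).trace_eq_sum_eigenvalues]
  exact sum_congr rfl fun k _ =>
    Real.sq_sqrt ((posSemidef_conjTranspose_mul_self X).eigenvalues_nonneg k)

theorem trace_transpose_mul_le_sum_gramSingularValues_mul (hU : Uᵀ * U = 1) (hV : Vᵀ * V = 1)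
    {σ : Fin n → ℝ} (hσ : Antitone σ) (hσ0 : ∀ i, 0 ≤ σ i) (X : Matrix (Fin m) (Fin n) ℝ)
    (π : Equiv.Perm (Fin n)) (hπ : Antitone (gramSingularValues X ∘ π)) :
    trace ((U * diagonal σ * Vᵀ)ᵀ * X) ≤ ∑ i, gramSingularValues X (π i) * σ i := by
  obtain ⟨W, hW, hXX⟩ := (isHermitian_conjTranspose_mul_self X).exists_orthogonal_diagonalization
  replace hXX : Xᵀ * X = _ := hXX
  have hWW : W * Wᵀ = 1 := mul_eq_one_comm.1 hW
  have hY : (X * W)ᵀ * (X * W) = diagonal (isHermitian_conjTranspose_mul_self X).eigenvalues := by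
    rw [transpose_mul, Matrix.mul_assoc, ← Matrix.mul_assoc Xᵀ, hXX]
    simp only [Matrix.mul_assoc, hW, Matrix.mul_one]
    rw [← Matrix.mul_assoc, hW, Matrix.one_mul]
  have hE : (Vᵀ * W)ᵀ * (Vᵀ * W) = 1 := by
    rw [transpose_mul, transpose_transpose, Matrix.mul_assoc, ← Matrix.mul_assoc V,
      mul_eq_one_comm.1 hV, Matrix.one_mul, hW]
  have htrace : trace ((U * diagonal σ * Vᵀ)ᵀ * X) =
      trace (diagonal σ * (Uᵀ * (X * W)) * (Vᵀ * W)ᵀ) := by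
    conv_lhs => rw [← Matrix.mul_one X, ← hWW]
    simp only [transpose_mul, transpose_transpose, diagonal_transpose, Matrix.mul_assoc]
    rw [trace_mul_comm]
    simp only [Matrix.mul_assoc]
  rw [htrace]
  exact trace_diagonal_mul_mul_transpose_le hU hY hE hσ hσ0 π hπ

theorem sum_sq_gramSingularValues_sub_le_frobSq_sub (hU : Uᵀ * U = 1) (hV : Vᵀ * V = 1)
    {σ : Fin n → ℝ} (hσ : Antitone σ) (hσ0 : ∀ i, 0 ≤ σ i) (X : Matrix (Fin m) (Fin n) ℝ)
    (π : Equiv.Perm (Fin n)) (hπ : Antitone (gramSingularValues X ∘ π)) :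
    ∑ i, (gramSingularValues X (π i) - σ i) ^ 2 ≤ frobSq (X - U * diagonal σ * Vᵀ) := by
  have hτ : ∑ i, gramSingularValues X (π i) ^ 2 = frobSq X := by
    rw [Equiv.sum_comp π (gramSingularValues X · ^ 2), sum_sq_gramSingularValues]
  have hvN := trace_transpose_mul_le_sum_gramSingularValues_mul hU hV hσ hσ0 X π hπ
  rw [frobSq_sub, frobSq_mul_diagonal_mul hU hV, ← hτ]
  simp only [sub_sq, sum_add_distrib, sum_sub_distrib, mul_assoc, ← mul_sum]
  linarith

end SingularValues

/-- Let `Z = U diag(σ) Vᵀ` be an SVD of the m×n matrix `Z` (`U` has orthonormal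
columns, `V` is orthogonal, `σ` is the nonincreasing nonnegative vector of singular values).
If `s ≥ 0` minimizes `ḡ(α) = ½‖α − σ‖² + ∑ᵢ P(αᵢ)` over `{α : α ≥ 0}`, then
`X* = U diag(s) Vᵀ` minimizes `g(X) = ½‖X − Z‖_F² + ∑ᵢ P(σᵢ(X))` over all m×n matrices. -/
theorem spectral_thresholding_operator
    {m n : ℕ} (P : ℝ → ℝ)
    (Z : Matrix (Fin m) (Fin n) ℝ)
    (U : Matrix (Fin m) (Fin n) ℝ) (V : Matrix (Fin n) (Fin n) ℝ) (σ : Fin n → ℝ)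
    (hU : Uᵀ * U = 1) (hV : Vᵀ * V = 1)
    (hσ : ∀ i, 0 ≤ σ i) (hσord : ∀ i j : Fin n, i ≤ j → σ j ≤ σ i)
    (hZ : Z = U * Matrix.diagonal σ * Vᵀ)
    (s : Fin n → ℝ) (hs : ∀ i, 0 ≤ s i)
    (hsmin : ∀ α : Fin n → ℝ, (∀ i, 0 ≤ α i) →
      (1 / 2) * (∑ i, (s i - σ i) ^ 2) + ∑ i, P (s i) ≤
      (1 / 2) * (∑ i, (α i - σ i) ^ 2) + ∑ i, P (α i)) :
    ∀ X : Matrix (Fin m) (Fin n) ℝ,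
      (1 / 2) * frobSq (U * Matrix.diagonal s * Vᵀ - Z) + spen P (U * Matrix.diagonal s * Vᵀ) ≤
      (1 / 2) * frobSq (X - Z) + spen P X := by
  intro X
  subst hZ
  have hnm : n ≤ m := by simpa using card_le_card_of_transpose_mul_self_eq_one hU
  obtain ⟨π, hπ⟩ := Tuple.exists_perm_antitone (gramSingularValues X)
  have hmirsky := sum_sq_gramSingularValues_sub_le_frobSq_sub hU hV hσord hσ X π hπ
  calc (1 / 2) * frobSq (U * diagonal s * Vᵀ - U * diagonal σ * Vᵀ) +
        spen P (U * diagonal s * Vᵀ)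
      = (1 / 2) * (∑ i, (s i - σ i) ^ 2) + ∑ i, P (s i) := by
        rw [← Matrix.sub_mul, ← Matrix.mul_sub, diagonal_sub, frobSq_mul_diagonal_mul hU hV,
          spen_mul_diagonal_mul P hnm hU hV hs]
    _ ≤ (1 / 2) * (∑ i, (gramSingularValues X (π i) - σ i) ^ 2) +
          ∑ i, P (gramSingularValues X (π i)) :=
        hsmin _ fun i => Real.sqrt_nonneg _
    _ ≤ (1 / 2) * frobSq (X - U * diagonal σ * Vᵀ) + spen P X := by
        rw [spen_eq_sum_gramSingularValues P X hnm, Equiv.sum_comp π fun i => P (gramSingularValues X i)]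
        linarith
end

section
/- Let λ ≥ 0 and γ > 1, and let P(·; λ, γ) be the MC+ penalty. For every σ ≥ 0, the unique minimizer over α ≥ 0 of (1/2)(α − σ)² + P(α; λ, γ) is s_{λ,γ}(σ) = 0 if σ ≤ λ; s_{λ,γ}(σ) = (σ − λ)/(1 − 1/γ) if λ < σ ≤ λγ; and s_{λ,γ}(σ) = σ if σ > λγ. -/
/-- The MC+ penalty with parameters `λ ≥ 0`, `γ > 0`, defined on `σ ≥ 0`:
`P(σ; λ, γ) = λ(σ − σ²/(2λγ))` for `0 ≤ σ < λγ` and `P(σ; λ, γ) = λ²γ/2` for `σ ≥ λγ`. -/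
noncomputable def mcPlus (lam γ σ : ℝ) : ℝ :=
  if σ < lam * γ then lam * (σ - σ ^ 2 / (2 * lam * γ)) else lam ^ 2 * γ / 2

/-- The MC+ scalar thresholding operator:
`0` if `σ ≤ λ`; `(σ − λ)/(1 − 1/γ)` if `λ < σ ≤ λγ`; `σ` if `σ > λγ`. -/
noncomputable def mcPlusThresh (lam γ σ : ℝ) : ℝ :=
  if σ ≤ lam then 0 else if σ ≤ lam * γ then (σ - lam) / (1 - 1 / γ) else σ

/-!
On `α ≥ 0` the penalty is `λα − α²/(2γ) + (α − λγ)₊²/(2γ)`, a concave quadratic plus a convex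
function, so it is `1/γ`-weakly convex with derivative `max (λ − α/γ) 0`. Since `γ > 1` the
objective `½(α − σ)² + P(α)` is therefore `(1 − 1/γ)`-strongly convex on `[0, ∞)`, and the
thresholding value satisfies the first-order condition there. Strong convexity plus the
first-order condition bound the excess objective below by `½(1 − 1/γ)(α − s)²`, which gives
minimality and uniqueness at once.
-/

lemma one_sub_one_div_pos {γ : ℝ} (hγ : 1 < γ) : 0 < 1 - 1 / γ := by
  rw [sub_pos, div_lt_one (by linarith)]
  exact hγ

noncomputable def mcPlusObjective (lam γ σ α : ℝ) : ℝ :=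
  1 / 2 * (α - σ) ^ 2 + mcPlus lam γ α

noncomputable def mcPlusDeriv (lam γ α : ℝ) : ℝ :=
  max (lam - α / γ) 0

lemma sq_max_zero_add_mul_le (x y : ℝ) :
    max x 0 ^ 2 + 2 * max x 0 * (y - x) ≤ max y 0 ^ 2 := by
  rcases le_total x 0 with hx | hx <;> rcases le_total y 0 with hy | hy <;>
    simp only [max_eq_left, max_eq_right, hx, hy] <;> nlinarith [sq_nonneg (x - y)]

lemma mcPlus_eq_of_nonneg {lam γ α : ℝ} (hγ : 0 < γ) (hα : 0 ≤ α) :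
    mcPlus lam γ α = lam * α - α ^ 2 / (2 * γ) + max (α - lam * γ) 0 ^ 2 / (2 * γ) := by
  unfold mcPlus
  split_ifs with h
  · rw [max_eq_right (by linarith)]
    rcases eq_or_ne lam 0 with rfl | hlam
    · rw [zero_mul] at h; linarith
    · field_simp; ring
  · rw [max_eq_left (by linarith)]
    field_simp; ring

lemma mcPlus_add_deriv_mul_sub_le {lam γ s α : ℝ} (hγ : 0 < γ) (hs : 0 ≤ s) (hα : 0 ≤ α) :
    mcPlus lam γ s + mcPlusDeriv lam γ s * (α - s) - (α - s) ^ 2 / (2 * γ) ≤ mcPlus lam γ α := by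
  have hderiv : mcPlusDeriv lam γ s = lam - s / γ + max (s - lam * γ) 0 / γ := by
    unfold mcPlusDeriv
    rcases le_total (s - lam * γ) 0 with h | h
    · rw [max_eq_right h, max_eq_left (by rw [sub_nonneg, div_le_iff₀ hγ]; linarith)]
      ring
    · rw [max_eq_left h, max_eq_right (by rw [sub_nonpos, le_div_iff₀ hγ]; linarith)]
      field_simp; ring
  have hconv := sq_max_zero_add_mul_le (s - lam * γ) (α - lam * γ)
  rw [mcPlus_eq_of_nonneg hγ hs, mcPlus_eq_of_nonneg hγ hα, hderiv]
  have key : max (s - lam * γ) 0 ^ 2 / (2 * γ) + max (s - lam * γ) 0 / γ * (α - s) ≤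
      max (α - lam * γ) 0 ^ 2 / (2 * γ) := by
    calc _ = (max (s - lam * γ) 0 ^ 2 + 2 * max (s - lam * γ) 0 * (α - s)) / (2 * γ) := by
          field_simp
      _ ≤ _ := by gcongr; linear_combination hconv
  have hquad : lam * s - s ^ 2 / (2 * γ) + (lam - s / γ) * (α - s) - (α - s) ^ 2 / (2 * γ) =
      lam * α - α ^ 2 / (2 * γ) := by
    field_simp; ring
  linarith

lemma mcPlusObjective_add_le {lam γ σ s α : ℝ} (hγ : 0 < γ) (hs : 0 ≤ s) (hα : 0 ≤ α) :
    mcPlusObjective lam γ σ s + (s - σ + mcPlusDeriv lam γ s) * (α - s) +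
        (1 - 1 / γ) / 2 * (α - s) ^ 2 ≤ mcPlusObjective lam γ σ α := by
  have hpen := mcPlus_add_deriv_mul_sub_le (lam := lam) hγ hs hα
  have hquad : 1 / 2 * (α - σ) ^ 2 = 1 / 2 * (s - σ) ^ 2 + (s - σ) * (α - s) +
      (1 - 1 / γ) / 2 * (α - s) ^ 2 + (α - s) ^ 2 / (2 * γ) := by
    field_simp; ring
  unfold mcPlusObjective
  linarith

lemma mcPlusThresh_nonneg {lam γ : ℝ} (hlam : 0 ≤ lam) (hγ : 1 < γ) (σ : ℝ) :
    0 ≤ mcPlusThresh lam γ σ := by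
  unfold mcPlusThresh
  split_ifs with h₁ h₂
  · rfl
  · exact div_nonneg (by linarith) (one_sub_one_div_pos hγ).le
  · exact (mul_nonneg hlam (by linarith)).trans (le_of_not_ge h₂)

lemma mcPlusThresh_first_order {lam γ : ℝ} (hlam : 0 ≤ lam) (hγ : 1 < γ) (σ : ℝ) {α : ℝ}
    (hα : 0 ≤ α) :
    0 ≤ (mcPlusThresh lam γ σ - σ + mcPlusDeriv lam γ (mcPlusThresh lam γ σ)) *
      (α - mcPlusThresh lam γ σ) := by
  have hγ₀ : 0 < γ := by linarith
  have hc := one_sub_one_div_pos hγ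
  unfold mcPlusThresh mcPlusDeriv
  split_ifs with h₁ h₂
  · rw [zero_div, sub_zero, max_eq_left hlam]
    nlinarith
  · set s := (σ - lam) / (1 - 1 / γ)
    have hsc : s * (1 - 1 / γ) = σ - lam := div_mul_cancel₀ _ hc.ne'
    have hcap : lam * γ * (1 - 1 / γ) = lam * γ - lam := by field_simp
    have hle : s / γ ≤ lam := by
      rw [div_le_iff₀ hγ₀]
      exact le_of_mul_le_mul_right (by linarith) hc
    have hzero : s - σ + (lam - s / γ) = 0 := by
      rw [← sub_eq_zero_of_eq hsc]; ring
    rw [max_eq_left (sub_nonneg.mpr hle), hzero, zero_mul]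
  · have hle : lam ≤ σ / γ := by rw [le_div_iff₀ hγ₀]; linarith
    rw [max_eq_right (sub_nonpos.mpr hle)]
    simp

theorem mcPlus_scalar_thresholding_general
    (lam γ σ : ℝ) (hlam : 0 ≤ lam) (hγ : 1 < γ) :
    0 ≤ mcPlusThresh lam γ σ ∧
    (∀ α : ℝ, 0 ≤ α →
      (1 / 2) * (mcPlusThresh lam γ σ - σ) ^ 2 + mcPlus lam γ (mcPlusThresh lam γ σ) ≤
      (1 / 2) * (α - σ) ^ 2 + mcPlus lam γ α) ∧
    (∀ α : ℝ, 0 ≤ α →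
      (1 / 2) * (α - σ) ^ 2 + mcPlus lam γ α =
        (1 / 2) * (mcPlusThresh lam γ σ - σ) ^ 2 + mcPlus lam γ (mcPlusThresh lam γ σ) →
      α = mcPlusThresh lam γ σ) := by
  set s := mcPlusThresh lam γ σ
  have hs : 0 ≤ s := mcPlusThresh_nonneg hlam hγ σ
  have growth : ∀ α, 0 ≤ α →
      mcPlusObjective lam γ σ s + (1 - 1 / γ) / 2 * (α - s) ^ 2 ≤ mcPlusObjective lam γ σ α :=
    fun α hα => by
      linarith [mcPlusThresh_first_order hlam hγ σ hα,
        mcPlusObjective_add_le (lam := lam) (σ := σ) (show (0 : ℝ) < γ by linarith) hs hα]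
  have hc : 0 < (1 - 1 / γ) / 2 := half_pos (one_sub_one_div_pos hγ)
  refine ⟨hs, fun α hα => ?_, fun α hα hEq => ?_⟩
  · change mcPlusObjective lam γ σ s ≤ mcPlusObjective lam γ σ α
    linarith [growth α hα, mul_nonneg hc.le (sq_nonneg (α - s))]
  · change mcPlusObjective lam γ σ α = mcPlusObjective lam γ σ s at hEq
    have hsq : (α - s) ^ 2 ≤ 0 := nonpos_of_mul_nonpos_right (by linarith [growth α hα]) hc
    exact sub_eq_zero.mp (pow_eq_zero_iff two_ne_zero |>.mp (le_antisymm hsq (sq_nonneg _)))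

/-- For `λ ≥ 0`, `γ > 1` and every `σ ≥ 0`, the MC+ scalar thresholding
value `s_{λ,γ}(σ)` is the unique minimizer over `α ≥ 0` of `½(α − σ)² + P(α; λ, γ)`. -/
theorem mcPlus_scalar_thresholding
    (lam γ σ : ℝ) (hlam : 0 ≤ lam) (hγ : 1 < γ) (hσ : 0 ≤ σ) :
    0 ≤ mcPlusThresh lam γ σ ∧
    (∀ α : ℝ, 0 ≤ α →
      (1 / 2) * (mcPlusThresh lam γ σ - σ) ^ 2 + mcPlus lam γ (mcPlusThresh lam γ σ) ≤
      (1 / 2) * (α - σ) ^ 2 + mcPlus lam γ α) ∧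
    (∀ α : ℝ, 0 ≤ α →
      (1 / 2) * (α - σ) ^ 2 + mcPlus lam γ α =
        (1 / 2) * (mcPlusThresh lam γ σ - σ) ^ 2 + mcPlus lam γ (mcPlusThresh lam γ σ) →
      α = mcPlusThresh lam γ σ) :=
  mcPlus_scalar_thresholding_general lam γ σ hlam hγ
end

section
/- For the MC+ penalty with parameters λ > 0 and γ > 0, the concavity measure equals φ_P = −1/γ; consequently, 1 + φ_P > 0 if and only if γ > 1, and for γ > 1 the MC+ scalar thresholding operator s_{λ,γ} (given by s_{λ,γ}(σ) = 0 for σ ≤ λ, (σ − λ)/(1 − 1/γ) for λ < σ ≤ λγ, and σ for σ > λγ) is Lipschitz continuous on [0,∞) with constant γ/(γ − 1). -/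
/-- The set of difference quotients of the derivative of a penalty `P` over `(0,∞)`;
its infimum is the concavity measure `φ_P`. -/
def derivDiffQuotients (P : ℝ → ℝ) : Set ℝ :=
  {q : ℝ | ∃ a b : ℝ, 0 < a ∧ 0 < b ∧ a ≠ b ∧ q = (deriv P a - deriv P b) / (a - b)}

/-!
Away from `λγ` the MC+ penalty is a concave quadratic or a constant, and the two pieces glue to
first order at `λγ`, so `P' = (λ - σ/γ)₊`. This is `1/γ`-Lipschitz, which bounds every difference
quotient of `P'` below by `-1/γ`, and on `(0, λγ]` it is affine of slope `-1/γ`, so the bound is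
attained. For `γ > 1` and `σ ≥ 0` the thresholding operator is `min (γ/(γ-1) · (σ - λ)₊) σ`, a
minimum of a `γ/(γ-1)`-Lipschitz and a `1`-Lipschitz function.
-/

open Set

lemma neg_le_div_of_abs_le_mul_abs {x d K : ℝ} (hd : d ≠ 0) (h : |x| ≤ K * |d|) :
    -K ≤ x / d :=
  neg_le_of_abs_le <| by rwa [abs_div, div_le_iff₀ (abs_pos.mpr hd)]

section MCPlus

variable {lam γ : ℝ}

lemma mcPlus_eqOn_Iic (hlam : lam ≠ 0) (hγ : γ ≠ 0) :
    EqOn (mcPlus lam γ) (fun σ => lam * σ - σ ^ 2 / (2 * γ)) (Iic (lam * γ)) := by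
  intro σ hσ
  rcases (mem_Iic.mp hσ).lt_or_eq with hlt | rfl
  · rw [mcPlus, if_pos hlt]
    field_simp
  · rw [mcPlus, if_neg (lt_irrefl _)]
    field_simp
    ring

lemma mcPlus_eqOn_Ici : EqOn (mcPlus lam γ) (fun _ => lam ^ 2 * γ / 2) (Ici (lam * γ)) :=
  fun _ hσ => if_neg (not_lt.mpr hσ)

lemma hasDerivWithinAt_mcPlus_Iic (hlam : lam ≠ 0) (hγ : 0 < γ) {σ : ℝ} (hσ : σ ≤ lam * γ) :
    HasDerivWithinAt (mcPlus lam γ) (max (lam - σ / γ) 0) (Iic (lam * γ)) σ := by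
  have hpoly : HasDerivAt (fun σ : ℝ => lam * σ - σ ^ 2 / (2 * γ)) (lam - σ / γ) σ := by
    refine (((hasDerivAt_id' σ).const_mul lam).sub
      ((hasDerivAt_pow 2 σ).div_const (2 * γ))).congr_deriv ?_
    field_simp
    ring
  have hnonneg : 0 ≤ lam - σ / γ := sub_nonneg.mpr <| (div_le_iff₀ hγ).mpr hσ
  rw [max_eq_left hnonneg]
  exact hpoly.hasDerivWithinAt.congr_of_mem (mcPlus_eqOn_Iic hlam hγ.ne') hσ

lemma hasDerivWithinAt_mcPlus_Ici (hγ : 0 < γ) {σ : ℝ} (hσ : lam * γ ≤ σ) :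
    HasDerivWithinAt (mcPlus lam γ) (max (lam - σ / γ) 0) (Ici (lam * γ)) σ := by
  have hnonpos : lam - σ / γ ≤ 0 := sub_nonpos.mpr <| (le_div_iff₀ hγ).mpr hσ
  rw [max_eq_right hnonpos]
  exact (hasDerivWithinAt_const σ _ _).congr_of_mem mcPlus_eqOn_Ici hσ

lemma hasDerivAt_mcPlus (hlam : lam ≠ 0) (hγ : 0 < γ) (σ : ℝ) :
    HasDerivAt (mcPlus lam γ) (max (lam - σ / γ) 0) σ := by
  rcases lt_trichotomy σ (lam * γ) with hlt | rfl | hgt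
  · exact (hasDerivWithinAt_mcPlus_Iic hlam hγ hlt.le).hasDerivAt (Iic_mem_nhds hlt)
  · rw [← hasDerivWithinAt_univ, ← Iic_union_Ici]
    exact (hasDerivWithinAt_mcPlus_Iic hlam hγ le_rfl).union
      (hasDerivWithinAt_mcPlus_Ici hγ le_rfl)
  · exact (hasDerivWithinAt_mcPlus_Ici hγ hgt.le).hasDerivAt (Ici_mem_nhds hgt)

lemma deriv_mcPlus (hlam : lam ≠ 0) (hγ : 0 < γ) (σ : ℝ) :
    deriv (mcPlus lam γ) σ = max (lam - σ / γ) 0 :=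
  (hasDerivAt_mcPlus hlam hγ σ).deriv

lemma abs_deriv_mcPlus_sub_le (hlam : lam ≠ 0) (hγ : 0 < γ) (a b : ℝ) :
    |deriv (mcPlus lam γ) a - deriv (mcPlus lam γ) b| ≤ 1 / γ * |a - b| :=
  calc |deriv (mcPlus lam γ) a - deriv (mcPlus lam γ) b|
      = |max (lam - a / γ) 0 - max (lam - b / γ) 0| := by
        rw [deriv_mcPlus hlam hγ, deriv_mcPlus hlam hγ]
    _ ≤ |(lam - a / γ) - (lam - b / γ)| := abs_max_sub_max_le_abs _ _ _
    _ = 1 / γ * |a - b| := by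
        rw [sub_sub_sub_cancel_left, ← sub_div, abs_div, abs_of_pos hγ, abs_sub_comm]
        ring

lemma neg_one_div_mem_derivDiffQuotients_mcPlus (hlam : 0 < lam) (hγ : 0 < γ) :
    -1 / γ ∈ derivDiffQuotients (mcPlus lam γ) := by
  have hc : 0 < lam * γ := mul_pos hlam hγ
  refine ⟨lam * γ, lam * γ / 2, hc, half_pos hc, (half_lt_self hc).ne', ?_⟩
  rw [deriv_mcPlus hlam.ne' hγ, deriv_mcPlus hlam.ne' hγ,
    max_eq_left (by rw [mul_div_cancel_right₀ _ hγ.ne', sub_self]),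
    max_eq_left (by field_simp; linarith)]
  field_simp
  ring

lemma isGLB_derivDiffQuotients_mcPlus (hlam : 0 < lam) (hγ : 0 < γ) :
    IsGLB (derivDiffQuotients (mcPlus lam γ)) (-1 / γ) := by
  refine IsLeast.isGLB ⟨neg_one_div_mem_derivDiffQuotients_mcPlus hlam hγ, ?_⟩
  rintro _ ⟨a, b, -, -, hab, rfl⟩
  rw [neg_div]
  exact neg_le_div_of_abs_le_mul_abs (sub_ne_zero.mpr hab)
    (abs_deriv_mcPlus_sub_le hlam.ne' hγ a b)

lemma mcPlusThresh_eq_min (hγ : 1 < γ) {σ : ℝ} (hσ : 0 ≤ σ) :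
    mcPlusThresh lam γ σ = min (γ / (γ - 1) * max (σ - lam) 0) σ := by
  have hγ1 : 0 < γ - 1 := sub_pos.mpr hγ
  have hdiv : ∀ x : ℝ, x / (1 - 1 / γ) = γ / (γ - 1) * x := fun x => by
    field_simp
  have hkey : γ / (γ - 1) * (σ - lam) ≤ σ ↔ σ ≤ lam * γ := by
    rw [div_mul_eq_mul_div, div_le_iff₀ hγ1]
    constructor <;> intro h <;> linarith
  unfold mcPlusThresh
  split_ifs with hle hmid
  · rw [max_eq_right (by linarith), mul_zero, min_eq_left hσ]
  · rw [hdiv, max_eq_left (by linarith), min_eq_left (hkey.mpr hmid)]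
  · rw [max_eq_left (by linarith), min_eq_right (not_le.mp (mt hkey.mp hmid)).le]

lemma abs_mcPlusThresh_sub_le (hγ : 1 < γ) {a b : ℝ} (ha : 0 ≤ a) (hb : 0 ≤ b) :
    |mcPlusThresh lam γ a - mcPlusThresh lam γ b| ≤ γ / (γ - 1) * |a - b| := by
  have hγ1 : 0 < γ - 1 := sub_pos.mpr hγ
  have hK : 1 ≤ γ / (γ - 1) := by rw [le_div_iff₀ hγ1]; linarith
  have hKpos : 0 < γ / (γ - 1) := one_pos.trans_le hK
  rw [mcPlusThresh_eq_min hγ ha, mcPlusThresh_eq_min hγ hb]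
  refine (abs_min_sub_min_le_max _ _ _ _).trans (max_le ?_ ?_)
  · rw [← mul_sub, abs_mul, abs_of_pos hKpos]
    refine mul_le_mul_of_nonneg_left ?_ hKpos.le
    exact (abs_max_sub_max_le_abs _ _ _).trans_eq (congrArg abs (sub_sub_sub_cancel_right a b lam))
  · exact le_mul_of_one_le_left (abs_nonneg _) hK

end MCPlus

/-- For the MC+ penalty with `λ > 0`, `γ > 0`, the concavity measure is
`φ_P = −1/γ`; consequently `1 + φ_P > 0 ↔ γ > 1`, and for `γ > 1` the MC+ scalar
thresholding operator is Lipschitz on `[0,∞)` with constant `γ/(γ − 1)`. -/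
theorem mcPlus_concavity_measure_and_lipschitz
    (lam γ : ℝ) (hlam : 0 < lam) (hγ : 0 < γ) :
    IsGLB (derivDiffQuotients (mcPlus lam γ)) (-1 / γ) ∧
    (0 < 1 + (-1 / γ) ↔ 1 < γ) ∧
    (1 < γ → ∀ a b : ℝ, 0 ≤ a → 0 ≤ b →
      |mcPlusThresh lam γ a - mcPlusThresh lam γ b| ≤ (γ / (γ - 1)) * |a - b|) := by
  refine ⟨isGLB_derivDiffQuotients_mcPlus hlam hγ, ?_,
    fun hγ1 _ _ ha hb => abs_mcPlusThresh_sub_le hγ1 ha hb⟩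
  have h : 1 + (-1 / γ) = (γ - 1) / γ := by field_simp; ring
  rw [h, div_pos_iff_of_pos_right hγ, sub_pos]
end

section
/- For ζ > 0 and γ > 1, the function h(t) := t · g_{ζ,γ}(t) on [0,∞) is Lipschitz continuous with constant (2γ − 1)/(2γ − 2); that is, for all t₁, t₂ ≥ 0, |t₁ g_{ζ,γ}(t₁) − t₂ g_{ζ,γ}(t₂)| ≤ ((2γ − 1)/(2γ − 2))·|t₁ − t₂|, and in particular the divided differences (t₁ g_{ζ,γ}(t₁) − t₂ g_{ζ,γ}(t₂))/(t₁ − t₂) for t₁ ≠ t₂ are bounded in absolute value by (2γ − 1)/(2γ − 2). -/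
/-! In the variable `s = √t` the map `h(t) = t · g_{ζ,γ}(t)` is piecewise quadratic: `0` for
`s ≤ ζ`, `γ/(γ-1) · (s² - ζ s)` for `ζ ≤ s ≤ ζγ` and `s²` for `s ≥ ζγ`. On a piece
`a s² + b s` the chord slope with respect to `t = s²` between `s₁` and `s₂` is
`a + b / (s₁ + s₂)`, which lies in `[0, (2γ-1)/(2γ-2)]` on every piece; the upper bound is
attained in the middle piece as `s₁, s₂ → ζγ`. A slope in `[0, K]` means that both `h` and
`K t - h` are monotone, and monotonicity glues across the common endpoints of the pieces. -/

/-- The function `g_{ζ,γ}` on `β ≥ 0`: `0` if `√β ≤ ζ`;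
`(γ/(γ−1))(1 − ζ/√β)` if `ζ < √β ≤ ζγ`; `1` if `√β > ζγ`. -/
noncomputable def gfun (ζ γ β : ℝ) : ℝ :=
  if Real.sqrt β ≤ ζ then 0
  else if Real.sqrt β ≤ ζ * γ then (γ / (γ - 1)) * (1 - ζ / Real.sqrt β)
  else 1

open Set Real

theorem abs_sub_le_mul_of_monotoneOn {f : ℝ → ℝ} {s : Set ℝ} {K : ℝ} (hf : MonotoneOn f s)
    (hKf : MonotoneOn (fun x => K * x - f x) s) {x y : ℝ} (hx : x ∈ s) (hy : y ∈ s) :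
    |f x - f y| ≤ K * |x - y| := by
  rcases le_total x y with hxy | hyx
  · rw [abs_of_nonpos (sub_nonpos.mpr (hf hx hy hxy)), abs_of_nonpos (sub_nonpos.mpr hxy)]
    linarith [hKf hx hy hxy]
  · rw [abs_of_nonneg (sub_nonneg.mpr (hf hy hx hyx)), abs_of_nonneg (sub_nonneg.mpr hyx)]
    linarith [hKf hy hx hyx]

theorem MonotoneOn.Icc_union_Ici {f : ℝ → ℝ} {a b : ℝ} (hab : a ≤ b)
    (h₁ : MonotoneOn f (Icc a b)) (h₂ : MonotoneOn f (Ici b)) : MonotoneOn f (Ici a) :=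
  Icc_union_Ici_eq_Ici hab ▸ h₁.union_right h₂ (isGreatest_Icc hab) isLeast_Ici

theorem monotoneOn_of_eqOn_quadratic {f : ℝ → ℝ} {s : Set ℝ} {a b K : ℝ}
    (hf : EqOn f (fun x => a * x ^ 2 + b * x) s)
    (hslope : ∀ x ∈ s, ∀ y ∈ s, x ≤ y → 0 ≤ a * (x + y) + b ∧ a * (x + y) + b ≤ K * (x + y)) :
    MonotoneOn f s ∧ MonotoneOn (fun x => K * x ^ 2 - f x) s := by
  constructor <;> intro x hx y hy hxy <;> obtain ⟨hlow, hhigh⟩ := hslope x hx y hy hxy <;>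
    simp only [hf hx, hf hy]
  · nlinarith [mul_nonneg (sub_nonneg.mpr hxy) hlow]
  · nlinarith [mul_nonneg (sub_nonneg.mpr hxy) (sub_nonneg.mpr hhigh)]

noncomputable def mulGfunSq (ζ γ s : ℝ) : ℝ := s ^ 2 * gfun ζ γ (s ^ 2)

theorem mulGfunSq_sqrt {ζ γ t : ℝ} (ht : 0 ≤ t) : mulGfunSq ζ γ √t = t * gfun ζ γ t := by
  rw [mulGfunSq, sq_sqrt ht]

section Pieces

variable {ζ γ : ℝ}

theorem mulGfunSq_eqOn_Icc_zero :
    EqOn (mulGfunSq ζ γ) (fun s => 0 * s ^ 2 + 0 * s) (Icc 0 ζ) := by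
  rintro s ⟨hs, hsζ⟩
  simp [mulGfunSq, gfun, sqrt_sq hs, hsζ]

theorem mulGfunSq_eqOn_Icc_mid (hζ : 0 < ζ) :
    EqOn (mulGfunSq ζ γ) (fun s => γ / (γ - 1) * s ^ 2 + -(γ / (γ - 1) * ζ) * s)
      (Icc ζ (ζ * γ)) := by
  rintro s ⟨hζs, hsζγ⟩
  simp only [mulGfunSq, gfun, sqrt_sq (hζ.le.trans hζs), hsζγ]
  split_ifs with hsζ
  · rw [le_antisymm hsζ hζs]; ring
  · field_simp [(hζ.trans_le hζs).ne']; ring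

theorem mulGfunSq_eqOn_Ici_top (hζ : 0 < ζ) (hγ : 1 < γ) :
    EqOn (mulGfunSq ζ γ) (fun s => 1 * s ^ 2 + 0 * s) (Ici (ζ * γ)) := by
  intro s (hs : ζ * γ ≤ s)
  have hζs : ζ < s := (lt_mul_of_one_lt_right hζ hγ).trans_le hs
  simp only [mulGfunSq, gfun, sqrt_sq (hζ.trans hζs).le, hζs.not_ge, if_false]
  split_ifs with hsζγ
  · rw [le_antisymm hsζγ hs]
    field_simp [(sub_pos.mpr hγ).ne']
    ring
  · ring

theorem mid_slope_bounds (hγ : 1 < γ) {u : ℝ} (hζu : ζ ≤ u) (huζγ : u ≤ 2 * ζ * γ) :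
    0 ≤ γ / (γ - 1) * u + -(γ / (γ - 1) * ζ) ∧
      γ / (γ - 1) * u + -(γ / (γ - 1) * ζ) ≤ (2 * γ - 1) / (2 * γ - 2) * u := by
  have hγ₁ : 0 < γ - 1 := sub_pos.mpr hγ
  have hgap : (2 * γ - 1) / (2 * γ - 2) * u - (γ / (γ - 1) * u + -(γ / (γ - 1) * ζ))
      = (2 * γ * ζ - u) / (2 * (γ - 1)) := by
    field_simp
    ring
  constructor
  · have : γ / (γ - 1) * u + -(γ / (γ - 1) * ζ) = γ / (γ - 1) * (u - ζ) := by ring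
    rw [this]
    exact mul_nonneg (by positivity) (sub_nonneg.mpr hζu)
  · rw [← sub_nonneg, hgap]
    exact div_nonneg (by linarith) (by positivity)

theorem monotoneOn_mulGfunSq (hζ : 0 < ζ) (hγ : 1 < γ) :
    MonotoneOn (mulGfunSq ζ γ) (Ici 0) ∧
      MonotoneOn (fun s => (2 * γ - 1) / (2 * γ - 2) * s ^ 2 - mulGfunSq ζ γ s) (Ici 0) := by
  have hζγ : ζ ≤ ζ * γ := le_mul_of_one_le_right hζ.le hγ.le
  set L := (2 * γ - 1) / (2 * γ - 2)
  have hL : 1 ≤ L := (one_le_div (by linarith)).mpr (by linarith)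
  obtain ⟨h₁, h₁'⟩ := monotoneOn_of_eqOn_quadratic (K := L)
    (mulGfunSq_eqOn_Icc_zero (ζ := ζ) (γ := γ))
    fun x hx y hy _ =>
      ⟨by simp, by simpa using mul_nonneg (zero_le_one.trans hL) (add_nonneg hx.1 hy.1)⟩
  obtain ⟨h₂, h₂'⟩ := monotoneOn_of_eqOn_quadratic (mulGfunSq_eqOn_Icc_mid (γ := γ) hζ)
    fun x hx y hy _ => mid_slope_bounds hγ (by linarith [hx.1, hy.1]) (by linarith [hx.2, hy.2])
  obtain ⟨h₃, h₃'⟩ := monotoneOn_of_eqOn_quadratic (K := L) (mulGfunSq_eqOn_Ici_top hζ hγ)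
    fun x (hx : ζ * γ ≤ x) y (hy : ζ * γ ≤ y) _ => ⟨by nlinarith, by nlinarith⟩
  exact ⟨h₁.Icc_union_Ici hζ.le (h₂.Icc_union_Ici hζγ h₃),
    h₁'.Icc_union_Ici hζ.le (h₂'.Icc_union_Ici hζγ h₃')⟩

end Pieces

/-- For `ζ > 0`, `γ > 1`, the map `t ↦ t·g_{ζ,γ}(t)` is Lipschitz on
`[0,∞)` with constant `(2γ−1)/(2γ−2)`; in particular its divided differences are bounded in
absolute value by `(2γ−1)/(2γ−2)`. -/
theorem gfun_lipschitz (ζ γ : ℝ) (hζ : 0 < ζ) (hγ : 1 < γ) :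
    (∀ t₁ t₂ : ℝ, 0 ≤ t₁ → 0 ≤ t₂ →
      |t₁ * gfun ζ γ t₁ - t₂ * gfun ζ γ t₂| ≤ ((2 * γ - 1) / (2 * γ - 2)) * |t₁ - t₂|) ∧
    (∀ t₁ t₂ : ℝ, 0 ≤ t₁ → 0 ≤ t₂ → t₁ ≠ t₂ →
      |(t₁ * gfun ζ γ t₁ - t₂ * gfun ζ γ t₂) / (t₁ - t₂)| ≤ (2 * γ - 1) / (2 * γ - 2)) := by
  obtain ⟨hmono, hmono'⟩ := monotoneOn_mulGfunSq hζ hγ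
  have hsqrt : MonotoneOn (fun t : ℝ => √t) (Ici 0) := fun _ _ _ _ h => sqrt_le_sqrt h
  have hmapsTo : MapsTo (fun t : ℝ => √t) (Ici 0) (Ici 0) := fun _ _ => sqrt_nonneg _
  have hh : MonotoneOn (fun t => t * gfun ζ γ t) (Ici 0) :=
    (hmono.comp hsqrt hmapsTo).congr fun t ht => mulGfunSq_sqrt ht
  have hh' : MonotoneOn (fun t => (2 * γ - 1) / (2 * γ - 2) * t - t * gfun ζ γ t) (Ici 0) :=
    (hmono'.comp hsqrt hmapsTo).congr fun t (ht : 0 ≤ t) => by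
      simp only [Function.comp_apply, sq_sqrt ht, mulGfunSq_sqrt ht]
  have hlip : ∀ t₁ t₂ : ℝ, 0 ≤ t₁ → 0 ≤ t₂ →
      |t₁ * gfun ζ γ t₁ - t₂ * gfun ζ γ t₂| ≤ ((2 * γ - 1) / (2 * γ - 2)) * |t₁ - t₂| :=
    fun t₁ t₂ h₁ h₂ => abs_sub_le_mul_of_monotoneOn hh hh' h₁ h₂
  refine ⟨hlip, fun t₁ t₂ h₁ h₂ hne => ?_⟩
  rw [abs_div, div_le_iff₀ (abs_pos.mpr (sub_ne_zero.mpr hne))]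
  exact hlip t₁ t₂ h₁ h₂
end
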